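/- arXiv:math/9704205 — 3 statements merged into one kernel-verified Lean document; each statement's English description precedes it below -/
import Mathlib

section
/- Let f : A → B be an embedding of bounded distributive lattices that is separative, i.e., whenever b ⊓ c = ⊥ in B there exists a ∈ A with f(a) ≥ b and f(a) ⊓ c = ⊥. Then for every maximal proper filter M of B, the preimage f⁻¹[M] is a maximal proper filter of A. -/
/-- `F` is a (lattice) filter: contains `⊤`, is upward closed, and closed under meets. -/
def IsLatticeFilter {A : Type*} [Lattice A] [BoundedOrder A] (F : Set A) : Prop :=
  ⊤ ∈ F ∧ (∀ a b : A, a ∈ F → a ≤ b → b ∈ F) ∧ (∀ a b : A, a ∈ F → b ∈ F → a ⊓ b ∈ F)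

/-- `F` is a maximal proper filter. -/
def IsMaximalFilter {A : Type*} [Lattice A] [BoundedOrder A] (F : Set A) : Prop :=
  IsLatticeFilter F ∧ (⊥ : A) ∉ F ∧
    ∀ G : Set A, IsLatticeFilter G → (⊥ : A) ∉ G → F ⊆ G → G = F

/-!
For maximality of `f⁻¹[M]`, let `G` be a proper filter containing `f⁻¹[M]` and some `a` with
`f a ∉ M`. Maximality of `M` gives `m ∈ M` with `m ⊓ f a = ⊥`; separativity moves `m` into the
image: `m ≤ f a'` with `f a' ⊓ f a = ⊥`. Then `a' ∈ f⁻¹[M] ⊆ G`, and injectivity turns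
`f (a' ⊓ a) = ⊥` into `a' ⊓ a = ⊥ ∈ G`, a contradiction.
-/

section Filters

variable {A B : Type*} [Lattice A] [BoundedOrder A] [Lattice B] [BoundedOrder B]

theorem IsLatticeFilter.preimage {F : Set B} (hF : IsLatticeFilter F) (f : A → B)
    (htop : f ⊤ = ⊤) (hinf : ∀ a b : A, f (a ⊓ b) = f a ⊓ f b) :
    IsLatticeFilter (f ⁻¹' F) := by
  obtain ⟨htopF, hupF, hinfF⟩ := hF
  refine ⟨by rwa [Set.mem_preimage, htop], fun a b ha hab => ?_, fun a b ha hb => ?_⟩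
  · have hle : f a ≤ f b := by
      calc f a = f (a ⊓ b) := by rw [inf_eq_left.mpr hab]
        _ = f a ⊓ f b := hinf a b
        _ ≤ f b := inf_le_right
    exact hupF _ _ ha hle
  · rw [Set.mem_preimage, hinf]
    exact hinfF _ _ ha hb

theorem IsLatticeFilter.setOf_exists_inf_le {F : Set A} (hF : IsLatticeFilter F) (b : A) :
    IsLatticeFilter {x | ∃ m ∈ F, m ⊓ b ≤ x} := by
  obtain ⟨htopF, -, hinfF⟩ := hF
  refine ⟨⟨⊤, htopF, le_top⟩, ?_, ?_⟩
  · rintro x y ⟨m, hm, hx⟩ hxy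
    exact ⟨m, hm, hx.trans hxy⟩
  · rintro x y ⟨m, hm, hx⟩ ⟨m', hm', hy⟩
    refine ⟨m ⊓ m', hinfF _ _ hm hm', le_inf ?_ ?_⟩
    · exact (inf_le_inf_right _ inf_le_left).trans hx
    · exact (inf_le_inf_right _ inf_le_right).trans hy

theorem IsMaximalFilter.exists_inf_eq_bot_of_notMem {M : Set A} (hM : IsMaximalFilter M)
    {b : A} (hb : b ∉ M) : ∃ m ∈ M, m ⊓ b = ⊥ := by
  obtain ⟨hMfilter, -, hmax⟩ := hM
  by_contra! hdisj
  have hproper : (⊥ : A) ∉ {x | ∃ m ∈ M, m ⊓ b ≤ x} := by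
    rintro ⟨m, hm, hle⟩
    exact hdisj m hm (le_bot_iff.mp hle)
  have hsub : M ⊆ {x | ∃ m ∈ M, m ⊓ b ≤ x} := fun m hm => ⟨m, hm, inf_le_left⟩
  have heq := hmax _ (hMfilter.setOf_exists_inf_le b) hproper hsub
  exact hb (heq ▸ ⟨⊤, hMfilter.1, inf_le_right⟩)

end Filters

theorem preimage_maxFilter_of_separative_general {A B : Type*}
    [DistribLattice A] [BoundedOrder A] [DistribLattice B] [BoundedOrder B]
    (f : A → B) (hinj : Function.Injective f)
    (hbot : f ⊥ = ⊥) (htop : f ⊤ = ⊤)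
    (hinf : ∀ a b : A, f (a ⊓ b) = f a ⊓ f b)
    (hsep : ∀ b c : B, b ⊓ c = ⊥ → ∃ a : A, b ≤ f a ∧ f a ⊓ c = ⊥)
    (M : Set B) (hM : IsMaximalFilter M) :
    IsMaximalFilter (f ⁻¹' M) := by
  have hproper : (⊥ : A) ∉ f ⁻¹' M := by
    rw [Set.mem_preimage, hbot]
    exact hM.2.1
  refine ⟨hM.1.preimage f htop hinf, hproper, fun G hG hGbot hsub => ?_⟩
  refine Set.Subset.antisymm (fun a haG => ?_) hsub
  by_contra ha
  obtain ⟨m, hm, hdisj⟩ := hM.exists_inf_eq_bot_of_notMem ha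
  obtain ⟨a', hma', hdisj'⟩ := hsep m (f a) hdisj
  have ha'G : a' ∈ G := hsub (hM.1.2.1 _ _ hm hma')
  have hbot' : a' ⊓ a = ⊥ := hinj (by rw [hinf, hdisj', hbot])
  exact hGbot (hbot' ▸ hG.2.2 _ _ ha'G haG)

/-- If `f : A → B` is a separative embedding of bounded distributive lattices, then the
preimage of any maximal proper filter of `B` is a maximal proper filter of `A`. -/
theorem preimage_maxFilter_of_separative {A B : Type*}
    [DistribLattice A] [BoundedOrder A] [DistribLattice B] [BoundedOrder B]
    (f : A → B) (hinj : Function.Injective f)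
    (hbot : f ⊥ = ⊥) (htop : f ⊤ = ⊤)
    (hinf : ∀ a b : A, f (a ⊓ b) = f a ⊓ f b)
    (hsup : ∀ a b : A, f (a ⊔ b) = f a ⊔ f b)
    (hsep : ∀ b c : B, b ⊓ c = ⊥ → ∃ a : A, b ≤ f a ∧ f a ⊓ c = ⊥)
    (M : Set B) (hM : IsMaximalFilter M) :
    IsMaximalFilter (f ⁻¹' M) :=
  preimage_maxFilter_of_separative_general f hinj hbot htop hinf hsep M hM
end

section
/- Let A be a normal bounded distributive lattice. Then every prime filter of A is contained in a unique maximal proper filter of A. -/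
/-- `F` is a prime filter: proper, and `a ⊔ b ∈ F` implies `a ∈ F` or `b ∈ F`. -/
def IsPrimeFilter {A : Type*} [Lattice A] [BoundedOrder A] (F : Set A) : Prop :=
  IsLatticeFilter F ∧ (⊥ : A) ∉ F ∧ ∀ a b : A, a ⊔ b ∈ F → a ∈ F ∨ b ∈ F

section LatticeFilter

variable {A : Type*} [Lattice A] [BoundedOrder A]

lemma IsLatticeFilter.not_mem_of_inf_eq_bot {F : Set A} (hF : IsLatticeFilter F)
    (hbot : (⊥ : A) ∉ F) {a b : A} (ha : a ∈ F) (hab : a ⊓ b = ⊥) : b ∉ F :=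
  fun hb => hbot (hab ▸ hF.2.2 a b ha hb)

lemma isLatticeFilter_sUnion {c : Set (Set A)} (hc : ∀ G ∈ c, IsLatticeFilter G)
    (hchain : IsChain (· ⊆ ·) c) (hne : c.Nonempty) : IsLatticeFilter (⋃₀ c) := by
  refine ⟨?_, ?_, ?_⟩
  · obtain ⟨G, hG⟩ := hne
    exact ⟨G, hG, (hc G hG).1⟩
  · rintro x y ⟨G, hG, hx⟩ hxy
    exact ⟨G, hG, (hc G hG).2.1 x y hx hxy⟩
  · rintro x y ⟨G, hG, hx⟩ ⟨H, hH, hy⟩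
    rcases hchain.total hG hH with hGH | hHG
    · exact ⟨H, hH, (hc H hH).2.2 x y (hGH hx) hy⟩
    · exact ⟨G, hG, (hc G hG).2.2 x y hx (hHG hy)⟩

lemma IsLatticeFilter.exists_isMaximalFilter_superset {F : Set A} (hF : IsLatticeFilter F)
    (hbot : (⊥ : A) ∉ F) : ∃ M : Set A, IsMaximalFilter M ∧ F ⊆ M := by
  let S : Set (Set A) := {G | IsLatticeFilter G ∧ (⊥ : A) ∉ G}
  have hchain : ∀ c ⊆ S, IsChain (· ⊆ ·) c → c.Nonempty → ∃ ub ∈ S, ∀ G ∈ c, G ⊆ ub :=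
    fun c hcS hc hne =>
      ⟨⋃₀ c, ⟨isLatticeFilter_sUnion (fun G hG => (hcS hG).1) hc hne,
        fun ⟨G, hG, hbG⟩ => (hcS hG).2 hbG⟩, fun _ => Set.subset_sUnion_of_mem⟩
  obtain ⟨M, hFM, ⟨hM, hMbot⟩, hMmax⟩ := zorn_subset_nonempty S hchain F ⟨hF, hbot⟩
  exact ⟨M, ⟨hM, hMbot, fun G hG hGbot hMG => (hMmax ⟨hG, hGbot⟩ hMG).antisymm hMG⟩, hFM⟩

/-- The filter generated by `F ∪ {a}`. -/
lemma IsLatticeFilter.isLatticeFilter_setOf_exists_inf_le {F : Set A} (hF : IsLatticeFilter F)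
    (a : A) : IsLatticeFilter {x | ∃ b ∈ F, a ⊓ b ≤ x} := by
  refine ⟨⟨⊤, hF.1, le_top⟩, ?_, ?_⟩
  · rintro x y ⟨b, hb, hbx⟩ hxy
    exact ⟨b, hb, hbx.trans hxy⟩
  · rintro x y ⟨b, hb, hbx⟩ ⟨c, hc, hcy⟩
    exact ⟨b ⊓ c, hF.2.2 b c hb hc,
      le_inf ((inf_le_inf_left a inf_le_left).trans hbx) ((inf_le_inf_left a inf_le_right).trans hcy)⟩

lemma IsMaximalFilter.exists_inf_eq_bot_of_not_mem {M : Set A} (hM : IsMaximalFilter M)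
    {a : A} (ha : a ∉ M) : ∃ b ∈ M, a ⊓ b = ⊥ := by
  obtain ⟨hMfil, -, hmax⟩ := hM
  by_contra! hne
  have hbot : (⊥ : A) ∉ {x | ∃ b ∈ M, a ⊓ b ≤ x} :=
    fun ⟨b, hb, hab⟩ => hne b hb (le_bot_iff.mp hab)
  have hgen := hmax _ (hMfil.isLatticeFilter_setOf_exists_inf_le a) hbot
    fun x hx => ⟨x, hx, inf_le_right⟩
  exact ha (hgen ▸ ⟨⊤, hMfil.1, inf_le_left⟩)

end LatticeFilter

lemma IsPrimeFilter.subset_of_isMaximalFilter {A : Type*} [Lattice A] [BoundedOrder A]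
    (hnorm : ∀ a b : A, a ⊓ b = ⊥ → ∃ a' b' : A, a ⊓ a' = ⊥ ∧ b ⊓ b' = ⊥ ∧ a' ⊔ b' = ⊤)
    {F M₁ M₂ : Set A} (hF : IsPrimeFilter F) (hM₁ : IsMaximalFilter M₁)
    (hM₂ : IsMaximalFilter M₂) (hFM₁ : F ⊆ M₁) (hFM₂ : F ⊆ M₂) : M₁ ⊆ M₂ := by
  intro a ha
  by_contra ha₂
  obtain ⟨b, hb, hab⟩ := hM₂.exists_inf_eq_bot_of_not_mem ha₂
  obtain ⟨a', b', haa', hbb', hsup⟩ := hnorm a b hab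
  rcases hF.2.2 a' b' (hsup ▸ hF.1.1) with ha' | hb'
  · exact hM₁.1.not_mem_of_inf_eq_bot hM₁.2.1 ha haa' (hFM₁ ha')
  · exact hM₂.1.not_mem_of_inf_eq_bot hM₂.2.1 hb hbb' (hFM₂ hb')

/-- In a normal bounded distributive lattice, every prime filter is contained in a
unique maximal proper filter. -/
theorem primeFilter_subset_unique_maxFilter {A : Type*}
    [DistribLattice A] [BoundedOrder A]
    (hnorm : ∀ a b : A, a ⊓ b = ⊥ →
      ∃ a' b' : A, a ⊓ a' = ⊥ ∧ b ⊓ b' = ⊥ ∧ a' ⊔ b' = ⊤)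
    (F : Set A) (hF : IsPrimeFilter F) :
    ∃! M : Set A, IsMaximalFilter M ∧ F ⊆ M := by
  obtain ⟨M, hM, hFM⟩ := hF.1.exists_isMaximalFilter_superset hF.2.1
  refine ⟨M, ⟨hM, hFM⟩, fun N ⟨hN, hFN⟩ => ?_⟩
  exact (hF.subset_of_isMaximalFilter hnorm hN hM hFN hFM).antisymm
    (hF.subset_of_isMaximalFilter hnorm hM hN hFM hFN)
end

section
/- Suppose f : X → Y is a function between compact Hausdorff spaces, B is a family of closed subsets of Y forming a base for the closed sets, and for each B ∈ B there exists a continuous map g_B : Y → Z_B to a compact Hausdorff space such that g_B ∘ f is continuous and B is g_B-saturated (g_B⁻¹[g_B[B]] = B). Then f is continuous. -/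
universe u

open Set

theorem isClosed_preimage_of_isCompact_of_saturated {X Y Z : Type*} [TopologicalSpace X]
    [TopologicalSpace Y] [TopologicalSpace Z] [T2Space Z] {f : X → Y} {g : Y → Z} {B : Set Y}
    (hB : IsCompact B) (hg : ContinuousOn g B) (hgf : Continuous (g ∘ f))
    (hsat : g ⁻¹' (g '' B) = B) : IsClosed (f ⁻¹' B) := by
  have hpre : f ⁻¹' B = (g ∘ f) ⁻¹' (g '' B) := by rw [preimage_comp, hsat]
  rw [hpre]
  exact (hB.image_of_continuousOn hg).isClosed.preimage hgf

theorem continuous_of_isClosed_preimage_of_closedBase {X Y : Type*} [TopologicalSpace X]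
    [TopologicalSpace Y] {f : X → Y} {𝓑 : Set (Set Y)}
    (hbase : ∀ C : Set Y, IsClosed C → ∃ S ⊆ 𝓑, C = ⋂₀ S)
    (hpre : ∀ B ∈ 𝓑, IsClosed (f ⁻¹' B)) : Continuous f := by
  refine continuous_iff_isClosed.mpr fun C hC => ?_
  obtain ⟨S, hS, rfl⟩ := hbase C hC
  rw [preimage_sInter]
  exact isClosed_biInter fun B hB => hpre B (hS hB)

theorem continuous_of_saturated_base_general
    {X Y : Type u} [TopologicalSpace X] [TopologicalSpace Y]
    [CompactSpace Y]
    (f : X → Y) (𝓑 : Set (Set Y))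
    (hclosed : ∀ B ∈ 𝓑, IsClosed B)
    (hbase : ∀ C : Set Y, IsClosed C → ∃ S ⊆ 𝓑, C = ⋂₀ S)
    (hsat : ∀ B ∈ 𝓑, ∃ (Z : Type u) (_ : TopologicalSpace Z)
      (_ : CompactSpace Z) (_ : T2Space Z) (g : Y → Z),
      Continuous g ∧ Continuous (g ∘ f) ∧ g ⁻¹' (g '' B) = B) :
    Continuous f := by
  refine continuous_of_isClosed_preimage_of_closedBase hbase fun B hB => ?_
  obtain ⟨Z, _, _, _, g, hg, hgf, hsatB⟩ := hsat B hB
  exact isClosed_preimage_of_isCompact_of_saturated (hclosed B hB).isCompact hg.continuousOn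
    hgf hsatB

/-- Continuity criterion (level ≥ 0 part of Lemma 3.1): if `B` is a base for the
closed sets of `Y` and for each `B ∈ 𝓑` there is a continuous `g_B : Y → Z_B` with
`g_B ∘ f` continuous and `B` being `g_B`-saturated, then `f` is continuous. -/
theorem continuous_of_saturated_base
    {X Y : Type u} [TopologicalSpace X] [TopologicalSpace Y]
    [CompactSpace X] [T2Space X] [CompactSpace Y] [T2Space Y]
    (f : X → Y) (𝓑 : Set (Set Y))
    (hclosed : ∀ B ∈ 𝓑, IsClosed B)
    (hbase : ∀ C : Set Y, IsClosed C → ∃ S ⊆ 𝓑, C = ⋂₀ S)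
    (hsat : ∀ B ∈ 𝓑, ∃ (Z : Type u) (_ : TopologicalSpace Z)
      (_ : CompactSpace Z) (_ : T2Space Z) (g : Y → Z),
      Continuous g ∧ Continuous (g ∘ f) ∧ g ⁻¹' (g '' B) = B) :
    Continuous f :=
  continuous_of_saturated_base_general f 𝓑 hclosed hbase hsat
end
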